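/- Let X, Y be Polish spaces, Γ : X → Set Y a multifunction with closed nonempty values such that {x : Γ(x) ∩ U ≠ ∅} is Borel for every open U ⊆ Y. Then there exists a Borel function s : X → Y with s(x) ∈ Γ(x) for all x. -/

import Mathlib

/-!
Fix a dense sequence `y` in `Y` and put `r n = 2⁻ⁿ`. Choose measurable indices `F n : X → ℕ` such
that `Γ x` meets `ball (y (F n x)) (r n) ∩ ball (y (F (n + 1) x)) (r (n + 1))`, always taking the
least admissible index: the set where a given index is admissible is, on each piece `{F n = j}`,
the set where `Γ` hits a fixed open set, hence measurable. The centres `y (F n x)` form a Cauchy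
sequence; its limit is measurable in `x` as a pointwise limit of countably valued measurable maps,
and lies in the closed set `Γ x` because `Γ x` comes within `r n` of the `n`-th centre.
-/

open Set Metric Filter Topology TopologicalSpace

theorem Nat.exists_seq_of_exists_succ {α : Type*} {P : ℕ → α → Prop} {R : ℕ → α → α → Prop}
    (h0 : ∃ a, P 0 a) (hsucc : ∀ n a, P n a → ∃ b, P (n + 1) b ∧ R n a b) :
    ∃ f : ℕ → α, ∀ n, P n (f n) ∧ R n (f n) (f (n + 1)) := by
  obtain ⟨a₀, ha₀⟩ := h0
  choose g hgP hgR using hsucc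
  let f : ∀ n, {a // P n a} := fun n =>
    Nat.rec ⟨a₀, ha₀⟩ (fun n a => ⟨g n a a.2, hgP n a a.2⟩) n
  exact ⟨fun n => (f n).1, fun n => ⟨(f n).2, hgR n (f n).1 (f n).2⟩⟩

section Metric

variable {Y : Type*} [PseudoMetricSpace Y]

theorem cauchySeq_of_ball_inter_ball_nonempty {u : ℕ → Y}
    (h : ∀ n, (ball (u n) ((1 / 2) ^ n) ∩ ball (u (n + 1)) ((1 / 2) ^ (n + 1))).Nonempty) :
    CauchySeq u := by
  refine cauchySeq_of_le_geometric (1 / 2 : ℝ) 2 (by norm_num) fun n => ?_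
  obtain ⟨z, hz, hz'⟩ := h n
  calc dist (u n) (u (n + 1)) ≤ dist (u n) z + dist z (u (n + 1)) := dist_triangle _ _ _
    _ ≤ (1 / 2) ^ n + (1 / 2) ^ (n + 1) := add_le_add (mem_ball'.1 hz).le (mem_ball.1 hz').le
    _ ≤ 2 * (1 / 2) ^ n := by rw [pow_succ]; linarith [pow_pos (one_half_pos (α := ℝ)) n]

theorem IsClosed.mem_of_tendsto_of_inter_ball_nonempty {S : Set Y} (hS : IsClosed S)
    {u : ℕ → Y} {a : Y} {r : ℕ → ℝ} (hu : Tendsto u atTop (𝓝 a)) (hr : Tendsto r atTop (𝓝 0))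
    (h : ∀ n, (S ∩ ball (u n) (r n)).Nonempty) : a ∈ S := by
  choose z hzS hz using h
  have hz_tendsto : Tendsto z atTop (𝓝 a) :=
    hu.congr_dist (squeeze_zero (fun _ => dist_nonneg) (fun n => (mem_ball'.1 (hz n)).le) hr)
  exact hS.mem_of_tendsto hz_tendsto (Eventually.of_forall hzS)

end Metric

section Selection

variable {X Y : Type*} [MeasurableSpace X]

def WeaklyMeasurable [TopologicalSpace Y] (Γ : X → Set Y) : Prop :=
  ∀ U : Set Y, IsOpen U → MeasurableSet {x | (Γ x ∩ U).Nonempty}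

namespace WeaklyMeasurable

theorem inter_comp [TopologicalSpace Y] {Γ : X → Set Y} (hΓ : WeaklyMeasurable Γ)
    {ι : Type*} [Countable ι] [MeasurableSpace ι] [MeasurableSingletonClass ι]
    {F : X → ι} (hF : Measurable F) {V : ι → Set Y} (hV : ∀ j, IsOpen (V j)) :
    WeaklyMeasurable fun x => Γ x ∩ V (F x) := by
  intro U hU
  have hunion : {x | (Γ x ∩ V (F x) ∩ U).Nonempty}
      = ⋃ j, F ⁻¹' {j} ∩ {x | (Γ x ∩ (V j ∩ U)).Nonempty} := by
    ext x
    simp [inter_assoc]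
  rw [hunion]
  exact .iUnion fun j => (hF (measurableSet_singleton j)).inter (hΓ _ ((hV j).inter hU))

theorem exists_measurable_index [PseudoMetricSpace Y] {Γ : X → Set Y}
    (hΓ : WeaklyMeasurable Γ) (hne : ∀ x, (Γ x).Nonempty) {y : ℕ → Y} (hy : DenseRange y)
    {δ : ℝ} (hδ : 0 < δ) : ∃ F : X → ℕ, Measurable F ∧ ∀ x, (Γ x ∩ ball (y (F x)) δ).Nonempty := by
  classical
  have hex : ∀ x, ∃ k, (Γ x ∩ ball (y k) δ).Nonempty := fun x => by
    obtain ⟨z, hz⟩ := hne x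
    obtain ⟨k, hk⟩ := hy.exists_dist_lt z hδ
    exact ⟨k, z, hz, mem_ball.2 hk⟩
  exact ⟨fun x => Nat.find (hex x), measurable_find hex fun k => hΓ _ isOpen_ball,
    fun x => Nat.find_spec (hex x)⟩

theorem exists_measurable_selection [PseudoMetricSpace Y] [CompleteSpace Y] [SeparableSpace Y]
    [MeasurableSpace Y] [BorelSpace Y] {Γ : X → Set Y} (hΓ : WeaklyMeasurable Γ)
    (hne : ∀ x, (Γ x).Nonempty) (hcl : ∀ x, IsClosed (Γ x)) :
    ∃ s : X → Y, Measurable s ∧ ∀ x, s x ∈ Γ x := by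
  rcases isEmpty_or_nonempty X with hX | ⟨⟨x₀⟩⟩
  · exact ⟨isEmptyElim, measurable_of_empty _, isEmptyElim⟩
  have : Nonempty Y := (hne x₀).to_subtype.map Subtype.val
  obtain ⟨y, hy⟩ := exists_dense_seq Y
  obtain ⟨F, hF⟩ := Nat.exists_seq_of_exists_succ
    (P := fun n F => Measurable F ∧ ∀ x, (Γ x ∩ ball (y (F x)) ((1 / 2) ^ n)).Nonempty)
    (R := fun n F G => ∀ x,
      (Γ x ∩ ball (y (F x)) ((1 / 2) ^ n) ∩ ball (y (G x)) ((1 / 2) ^ (n + 1))).Nonempty)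
    (hΓ.exists_measurable_index hne hy one_pos) fun n F ⟨hFm, hFΓ⟩ => by
      obtain ⟨G, hGm, hG⟩ := (hΓ.inter_comp hFm fun _ => isOpen_ball).exists_measurable_index
        hFΓ hy (pow_pos one_half_pos _)
      exact ⟨G, ⟨hGm, fun x => (hG x).mono (inter_subset_inter_left _ inter_subset_left)⟩, hG⟩
  have hcauchy : ∀ x, CauchySeq fun n => y (F n x) := fun x =>
    cauchySeq_of_ball_inter_ball_nonempty fun n => ((hF n).2 x).mono fun _ hz => ⟨hz.1.2, hz.2⟩
  choose s hs using fun x => cauchySeq_tendsto_of_complete (hcauchy x)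
  refine ⟨s, measurable_of_tendsto_metrizable (fun n => measurable_from_nat.comp (hF n).1.1)
    (tendsto_pi_nhds.2 hs), fun x => ?_⟩
  exact (hcl x).mem_of_tendsto_of_inter_ball_nonempty (hs x)
    (tendsto_pow_atTop_nhds_zero_of_lt_one (by norm_num) (by norm_num)) fun n => (hF n).1.2 x

end WeaklyMeasurable

end Selection

theorem stmt7_general {X Y : Type*}
    [MeasurableSpace X]
    [TopologicalSpace Y] [PolishSpace Y] [MeasurableSpace Y] [BorelSpace Y]
    (Γ : X → Set Y)
    (hne : ∀ x, (Γ x).Nonempty) (hcl : ∀ x, IsClosed (Γ x))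
    (hmeas : ∀ U : Set Y, IsOpen U → MeasurableSet {x : X | (Γ x ∩ U).Nonempty}) :
    ∃ s : X → Y, Measurable s ∧ ∀ x, s x ∈ Γ x := by
  let := upgradeIsCompletelyMetrizable Y
  exact WeaklyMeasurable.exists_measurable_selection hmeas hne hcl

/-- Kuratowski–Ryll-Nardzewski measurable selection: a closed-nonempty-valued
multifunction between Polish spaces that is Borel-measurable (preimages of open
sets under the "hits" map are Borel) admits a Borel selector. -/
theorem stmt7 {X Y : Type*}
    [TopologicalSpace X] [PolishSpace X] [MeasurableSpace X] [BorelSpace X]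
    [TopologicalSpace Y] [PolishSpace Y] [MeasurableSpace Y] [BorelSpace Y]
    (Γ : X → Set Y)
    (hne : ∀ x, (Γ x).Nonempty) (hcl : ∀ x, IsClosed (Γ x))
    (hmeas : ∀ U : Set Y, IsOpen U → MeasurableSet {x : X | (Γ x ∩ U).Nonempty}) :
    ∃ s : X → Y, Measurable s ∧ ∀ x, s x ∈ Γ x :=
  stmt7_general Γ hne hcl hmeas
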